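/- arXiv:2510.01794 — 3 statements merged into one kernel-verified Lean document; each statement's English description precedes it below -/
import Mathlib

section
/- Let U = {u ∈ ℝ^m : G u ≤ h} be a polyhedron given by a matrix G ∈ ℝ^{p×m} and h ∈ ℝ^p, let D ⊆ ℝ^n be a nonempty compact set, and K ∈ ℝ^{m×n}. Then the Pontryagin difference U ⊖ KD equals {u ∈ ℝ^m : G u ≤ h − s}, where s ∈ ℝ^p is defined componentwise by s_i = max_{d ∈ D} (G_i K d), the maximum of the i-th row of G applied to Kd over d ∈ D. -/
/-! The Pontryagin difference commutes with intersections, so it suffices to shrink one half-space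
`{f ≤ c}` at a time; by additivity of `f`, `u + t` lies in it for every `t ∈ T` exactly when
`f u + sup_T f ≤ c`. -/

/-- Pontryagin difference: `S ⊖ T = {x | x + t ∈ S for all t ∈ T}`. -/
def pontryaginDiff {α : Type*} [Add α] (S T : Set α) : Set α := {x | ∀ t ∈ T, x + t ∈ S}

theorem pontryaginDiff_iInter {ι α : Type*} [Add α] (S : ι → Set α) (T : Set α) :
    pontryaginDiff (⋂ i, S i) T = ⋂ i, pontryaginDiff (S i) T := by
  ext u
  simp only [pontryaginDiff, Set.mem_iInter, Set.mem_ofPred_eq]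
  exact ⟨fun H i t ht => H t ht i, fun H t ht i => H i t ht⟩

section

variable {M β : Type*} [AddZeroClass M] [AddCommGroup β] [LinearOrder β] [IsOrderedAddMonoid β]

theorem pontryaginDiff_halfspace (f : M →+ β) (c : β) {T : Set M} {s : β}
    (hs : IsLUB (f '' T) s) :
    pontryaginDiff {u | f u ≤ c} T = {u | f u ≤ c - s} := by
  ext u
  calc u ∈ pontryaginDiff {u | f u ≤ c} T
      ↔ ∀ t ∈ T, f t ≤ c - f u := by
        simp only [pontryaginDiff, Set.mem_ofPred_eq, map_add, le_sub_iff_add_le']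
    _ ↔ s ≤ c - f u := by rw [isLUB_le_iff hs, mem_upperBounds, Set.forall_mem_image]
    _ ↔ u ∈ {u | f u ≤ c - s} := le_sub_comm

theorem pontryaginDiff_polyhedron {ι : Type*} (A : M →+ (ι → β)) (h : ι → β) (T : Set M)
    {s : ι → β} (hs : ∀ i, IsLUB ((A · i) '' T) (s i)) :
    pontryaginDiff {u | ∀ i, A u i ≤ h i} T = {u | ∀ i, A u i ≤ h i - s i} := by
  simp only [Set.ofPred_forall, pontryaginDiff_iInter]
  exact Set.iInter_congr fun i =>
    pontryaginDiff_halfspace ((Pi.evalAddMonoidHom _ i).comp A) (h i) (hs i)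

end

theorem pontryagin_diff_polyhedron_general {n m p : ℕ}
    (G : Matrix (Fin p) (Fin m) ℝ) (h : Fin p → ℝ)
    (U : Set (Fin m → ℝ)) (hU : U = {u | ∀ i, G.mulVec u i ≤ h i})
    (D : Set (Fin n → ℝ))
    (K : Matrix (Fin m) (Fin n) ℝ)
    (s : Fin p → ℝ)
    (hs : ∀ i, IsGreatest ((fun d => G.mulVec (K.mulVec d) i) '' D) (s i)) :
    pontryaginDiff U (K.mulVec '' D) = {u | ∀ i, G.mulVec u i ≤ h i - s i} := by
  subst hU
  refine pontryaginDiff_polyhedron G.mulVecLin.toAddMonoidHom h _ fun i => ?_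
  rw [Set.image_image]
  exact (hs i).isLUB

/-- the Pontryagin difference of a polyhedron `U = {u | Gu ≤ h}` and the
linear image `K '' D` of a nonempty compact set `D` is the polyhedron `{u | Gu ≤ h - s}`,
where `s i = max_{d ∈ D} (G K d) i`. -/
theorem pontryagin_diff_polyhedron {n m p : ℕ}
    (G : Matrix (Fin p) (Fin m) ℝ) (h : Fin p → ℝ)
    (U : Set (Fin m → ℝ)) (hU : U = {u | ∀ i, G.mulVec u i ≤ h i})
    (D : Set (Fin n → ℝ)) (hDne : D.Nonempty) (hDc : IsCompact D)
    (K : Matrix (Fin m) (Fin n) ℝ)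
    (s : Fin p → ℝ)
    (hs : ∀ i, IsGreatest ((fun d => G.mulVec (K.mulVec d) i) '' D) (s i)) :
    pontryaginDiff U (K.mulVec '' D) = {u | ∀ i, G.mulVec u i ≤ h i - s i} :=
  pontryagin_diff_polyhedron_general G h U hU D K s hs
end

section
/- Consider the system x_{k+1} = A x_k + B u_k + d_k with d_k ∈ D, under the disturbance feedback policy u_j = ū_j + Σ_{i=0}^{min(j,M)−1} K_i d_{j−i−1} for j ≥ 0 (with u_0 = ū_0), where K_0,...,K_{M−1} satisfy the deadbeat condition A^M + Σ_{i=0}^{M−1} A^{M−1−i} B K_i = 0. Let x̄_j denote the nominal trajectory (x̄_0 = x_0, x̄_{j+1} = A x̄_j + B ū_j). Then for all j ≥ 1, x_j = x̄_j + Σ_{i=max(0,j−M)}^{j−1} Φ_{j−i−2} d_i, where Φ_{−1} = I and Φ_l = A^{l+1} + Σ_{i=0}^{l} A^{l−i} B K_i for l ≥ 0. -/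
/-- Shifted auxiliary matrices: `phiMat j = Φ_{j-1}`, i.e. `phiMat 0 = Φ_{-1} = I` and
`phiMat (l+1) = Φ_l = A^{l+1} + ∑_{i=0}^{l} A^{l-i} B K_i`. -/
def phiMat {n m : ℕ} (A : Matrix (Fin n) (Fin n) ℝ) (B : Matrix (Fin n) (Fin m) ℝ)
    (K : ℕ → Matrix (Fin m) (Fin n) ℝ) (j : ℕ) : Matrix (Fin n) (Fin n) ℝ :=
  A ^ j + ∑ i ∈ Finset.range j, A ^ (j - 1 - i) * B * K i

lemma phiMat_zero {n m : ℕ} (A : Matrix (Fin n) (Fin n) ℝ) (B : Matrix (Fin n) (Fin m) ℝ)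
    (K : ℕ → Matrix (Fin m) (Fin n) ℝ) : phiMat A B K 0 = 1 := by
  simp [phiMat]

lemma phiMat_succ {n m : ℕ} (A : Matrix (Fin n) (Fin n) ℝ) (B : Matrix (Fin n) (Fin m) ℝ)
    (K : ℕ → Matrix (Fin m) (Fin n) ℝ) (l : ℕ) :
    phiMat A B K (l + 1) = A * phiMat A B K l + B * K l := by
  simp only [phiMat, Finset.sum_range_succ, mul_add, Finset.mul_sum]
  have h1 : A ^ (l + 1) = A * A ^ l := pow_succ' A l
  have h2 : ∀ i ∈ Finset.range l, A ^ (l + 1 - 1 - i) * B * K i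
      = A * (A ^ (l - 1 - i) * B * K i) := by
    intro i hi
    rw [Finset.mem_range] at hi
    have : l + 1 - 1 - i = (l - 1 - i) + 1 := by omega
    rw [this, pow_succ']
    simp only [Matrix.mul_assoc]
  rw [Finset.sum_congr rfl h2, h1]
  have : l + 1 - 1 - l = 0 := by omega
  rw [this, pow_zero, Matrix.one_mul]
  abel

lemma mulVec_sumF {n k : ℕ} (A : Matrix (Fin n) (Fin k) ℝ) (s : Finset ℕ)
    (f : ℕ → Fin k → ℝ) :
    A.mulVec (∑ i ∈ s, f i) = ∑ i ∈ s, A.mulVec (f i) := by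
  exact map_sum (Matrix.mulVecLin A) f s

/-- under the deadbeat disturbance feedback policy
`u_j = ū_j + ∑_{i=0}^{min(j,M)-1} K_i d_{j-i-1}`, the true state of
`x_{k+1} = A x_k + B u_k + d_k` deviates from the nominal trajectory `x̄` by
`x_j = x̄_j + ∑_{i=max(0,j-M)}^{j-1} Φ_{j-i-2} d_i` for all `j ≥ 1`
(here `Φ_{j-i-2} = phiMat (j-i-1)`, with `Φ_{-1} = I`). -/
theorem disturbance_deviation_formula {n m M : ℕ} (hM : 0 < M)
    (A : Matrix (Fin n) (Fin n) ℝ) (B : Matrix (Fin n) (Fin m) ℝ)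
    (K : ℕ → Matrix (Fin m) (Fin n) ℝ)
    (hdb : A ^ M + ∑ i ∈ Finset.range M, A ^ (M - 1 - i) * B * K i = 0)
    (d : ℕ → Fin n → ℝ) (ubar : ℕ → Fin m → ℝ) (u : ℕ → Fin m → ℝ)
    (hu : ∀ j, u j = ubar j + ∑ i ∈ Finset.range (min j M), (K i).mulVec (d (j - i - 1)))
    (x xbar : ℕ → Fin n → ℝ)
    (hinit : x 0 = xbar 0)
    (hx : ∀ j, x (j + 1) = A.mulVec (x j) + B.mulVec (u j) + d j)
    (hxbar : ∀ j, xbar (j + 1) = A.mulVec (xbar j) + B.mulVec (ubar j)) :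
    ∀ j ≥ 1, x j = xbar j +
      ∑ i ∈ Finset.Ico (j - M) j, (phiMat A B K (j - i - 1)).mulVec (d i) := by
  have hphiM : phiMat A B K M = 0 := hdb
  intro j hj
  induction j, hj using Nat.le_induction with
  | base =>
    have h0 : (1 : ℕ) - M = 0 := by omega
    rw [hx 0, hu 0, hxbar 0, hinit, h0]
    simp [phiMat_zero]
  | succ j hj ih =>
    rw [hx j, hu j, ih, hxbar j]
    rw [Matrix.mulVec_add, Matrix.mulVec_add]
    rw [mulVec_sumF, mulVec_sumF]
    -- reindex the control sum
    have hre : ∑ i ∈ Finset.range (min j M), B.mulVec ((K i).mulVec (d (j - i - 1)))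
        = ∑ i ∈ Finset.Ico (j - M) j, ((B * K (j - i - 1)).mulVec (d i)) := by
      apply Finset.sum_nbij' (fun i => j - 1 - i) (fun i => j - 1 - i)
      · intro i hi
        rw [Finset.mem_range, Nat.lt_min] at hi
        rw [Finset.mem_Ico]
        omega
      · intro i hi
        rw [Finset.mem_Ico] at hi
        rw [Finset.mem_range, Nat.lt_min]
        omega
      · intro i hi
        rw [Finset.mem_range, Nat.lt_min] at hi
        omega
      · intro i hi
        rw [Finset.mem_Ico] at hi
        omega
      · intro i hi
        rw [Finset.mem_range, Nat.lt_min] at hi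
        have h1 : j - (j - 1 - i) - 1 = i := by omega
        have h2 : j - i - 1 = j - 1 - i := by omega
        rw [h1, h2, Matrix.mulVec_mulVec]
    have hterm : ∀ i ∈ Finset.Ico (j - M) j,
        A.mulVec ((phiMat A B K (j - i - 1)).mulVec (d i)) + (B * K (j - i - 1)).mulVec (d i)
        = (phiMat A B K (j - i)).mulVec (d i) := by
      intro i hi
      rw [Finset.mem_Ico] at hi
      have : j - i = (j - i - 1) + 1 := by omega
      rw [this, phiMat_succ, Matrix.add_mulVec, Matrix.mulVec_mulVec,
        Nat.add_sub_cancel]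
    have hdj : d j = (phiMat A B K (j - j)).mulVec (d j) := by
      simp [phiMat_zero]
    have hsum : ∑ i ∈ Finset.Ico (j - M) j, (phiMat A B K (j - i)).mulVec (d i) + d j
        = ∑ i ∈ Finset.Ico (j - M) (j + 1), (phiMat A B K (j - i)).mulVec (d i) := by
      rw [Finset.sum_Ico_succ_top (by omega : j - M ≤ j), ← hdj]
    have hfin : ∑ i ∈ Finset.Ico (j - M) (j + 1), (phiMat A B K (j - i)).mulVec (d i)
        = ∑ i ∈ Finset.Ico (j + 1 - M) (j + 1), (phiMat A B K (j + 1 - i - 1)).mulVec (d i) := by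
      rcases le_or_gt M j with h | h
      · have hb : j - M < j + 1 := by omega
        rw [Finset.sum_eq_sum_Ico_succ_bot hb]
        have : j - (j - M) = M := by omega
        rw [this, hphiM, Matrix.zero_mulVec, zero_add]
        have : j - M + 1 = j + 1 - M := by omega
        rw [this]
        apply Finset.sum_congr rfl
        intro i hi
        rw [Finset.mem_Ico] at hi
        have : j + 1 - i - 1 = j - i := by omega
        rw [this]
      · have : j + 1 - M = j - M := by omega
        rw [this]
        apply Finset.sum_congr rfl
        intro i hi
        rw [Finset.mem_Ico] at hi
        have : j + 1 - i - 1 = j - i := by omega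
        rw [this]
    have key : ∑ i ∈ Finset.Ico (j - M) j, A.mulVec ((phiMat A B K (j - i - 1)).mulVec (d i))
        + ∑ i ∈ Finset.Ico (j - M) j, ((B * K (j - i - 1)).mulVec (d i)) + d j
        = ∑ i ∈ Finset.Ico (j + 1 - M) (j + 1), (phiMat A B K (j + 1 - i - 1)).mulVec (d i) := by
      rw [← Finset.sum_add_distrib, Finset.sum_congr rfl hterm, hsum, hfin]
    rw [hre, ← key]
    abel
end

section
/- Under the setting of the disturbance feedback deadbeat policy (deadbeat condition A^M + Σ A^{M−1−i} B K_i = 0, Φ matrices as defined), if the nominal state satisfies x̄_j ∈ X ⊖ D ⊖ Φ_0 D ⊖ Φ_1 D ⊖ ... ⊖ Φ_{min(j,M)−2} D for a convex set X, then the true state satisfies x_j ∈ X for every admissible disturbance sequence d_0, ..., d_{j−1} ∈ D. -/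
/-- The tightened state constraint sets: `tightenX k = X ⊖ D ⊖ Φ_0 D ⊖ ⋯ ⊖ Φ_{k-2} D`
(`tightenX 0 = X`, and each step subtracts `phiMat k · D`, with `phiMat 0 = I`). -/
def tightenX {n m : ℕ} (A : Matrix (Fin n) (Fin n) ℝ) (B : Matrix (Fin n) (Fin m) ℝ)
    (K : ℕ → Matrix (Fin m) (Fin n) ℝ) (X D : Set (Fin n → ℝ)) : ℕ → Set (Fin n → ℝ)
  | 0 => X
  | k + 1 => pontryaginDiff (tightenX A B K X D k) ((phiMat A B K k).mulVec '' D)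

lemma tightenX_add_sum {n m : ℕ} (A : Matrix (Fin n) (Fin n) ℝ) (B : Matrix (Fin n) (Fin m) ℝ)
    (K : ℕ → Matrix (Fin m) (Fin n) ℝ) (X D : Set (Fin n → ℝ)) (k : ℕ) :
    ∀ (x : Fin n → ℝ), x ∈ tightenX A B K X D k →
    ∀ (v : ℕ → Fin n → ℝ), (∀ l < k, v l ∈ (phiMat A B K l).mulVec '' D) →
    x + ∑ l ∈ Finset.range k, v l ∈ X := by
  induction k with
  | zero => intro x hx v _; simpa [tightenX] using hx
  | succ k ih =>
    intro x hx v hv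
    have hxk : x + v k ∈ tightenX A B K X D k := hx (v k) (hv k (Nat.lt_succ_self k))
    have := ih (x + v k) hxk v (fun l hl => hv l (Nat.lt_succ_of_lt hl))
    rw [Finset.sum_range_succ]
    have : x + (∑ l ∈ Finset.range k, v l + v k) = (x + v k) + ∑ l ∈ Finset.range k, v l := by
      abel
    rw [this]
    exact ih (x + v k) hxk v (fun l hl => hv l (Nat.lt_succ_of_lt hl))

/-- if the nominal state satisfies the tightened state constraint
`x̄_j ∈ X ⊖ D ⊖ Φ_0 D ⊖ ⋯ ⊖ Φ_{min(j,M)-2} D`, then the true state `x_j` lies in `X`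
for every admissible disturbance sequence. -/
theorem tightened_state_constraint_robust {n m M : ℕ} (hM : 0 < M)
    (A : Matrix (Fin n) (Fin n) ℝ) (B : Matrix (Fin n) (Fin m) ℝ)
    (K : ℕ → Matrix (Fin m) (Fin n) ℝ)
    (hdb : A ^ M + ∑ i ∈ Finset.range M, A ^ (M - 1 - i) * B * K i = 0)
    (X : Set (Fin n → ℝ)) (hX : Convex ℝ X)
    (D : Set (Fin n → ℝ))
    (j : ℕ) (d : ℕ → Fin n → ℝ) (hd : ∀ i < j, d i ∈ D)
    (xj xbarj : Fin n → ℝ)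
    (hdev : xj = xbarj +
      ∑ i ∈ Finset.Ico (j - M) j, (phiMat A B K (j - i - 1)).mulVec (d i))
    (hxbar : xbarj ∈ tightenX A B K X D (min j M)) :
    xj ∈ X := by
  have hsum : ∑ i ∈ Finset.Ico (j - M) j, (phiMat A B K (j - i - 1)).mulVec (d i)
      = ∑ l ∈ Finset.range (min j M), (phiMat A B K l).mulVec (d (j - 1 - l)) := by
    apply Finset.sum_nbij' (fun i => j - i - 1) (fun l => j - 1 - l)
    · intro i hi; simp only [Finset.mem_Ico] at hi; simp only [Finset.mem_range]; omega
    · intro l hl; simp only [Finset.mem_range] at hl; simp only [Finset.mem_Ico]; omega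
    · intro i hi; simp only [Finset.mem_Ico] at hi; omega
    · intro l hl; simp only [Finset.mem_range] at hl; omega
    · intro i hi; simp only [Finset.mem_Ico] at hi
      have : j - 1 - (j - i - 1) = i := by omega
      rw [this]
  rw [hdev, hsum]
  apply tightenX_add_sum A B K X D (min j M) xbarj hxbar
  intro l hl
  exact ⟨d (j - 1 - l), hd _ (by omega), rfl⟩
end
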